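/- Fix m ≥ 1 and let f : ℕ → ℕ be defined by f(0) = 2, f(1) = 8, and f(k) = 7f(k−1) + 4f(k−2) for k ≥ 2. Let c = c_{m−1} ... c_0 be a codeword of OPC(m), with symbols viewed as natural numbers in {0,...,7}. For 0 ≤ i ≤ m−1 define: y_{i,1} = 1 if i+2 ≤ m−1 and either (c_{i+2} ∈ {0,1,4,5}, c_{i+1} = 2, c_i ∈ {2,3}) or (c_{i+2} ∈ {2,3,6,7}, c_{i+1} = 5, c_i ∈ {4,5}), and y_{i,1} = 0 otherwise; y_{i,2} = 1 if i+2 ≤ m−1, c_{i+2} ∈ {0,1,4,5}, c_{i+1} = 2, and c_i ∈ {6,7}, and y_{i,2} = 0 otherwise; y_{i,3} = 1 if y_{i,1} = y_{i,2} = 0, i+1 ≤ m−1, and either (c_{i+1} ∈ {0,1,4,5} and c_i ∈ {3,4,5,6,7}) or (c_{i+1} ∈ {2,3,6,7} and c_i ∈ {6,7}), and y_{i,3} = 0 otherwise. Then the lexicographic index g(c) of c in OPC(m) satisfies 8·g(c) = Σ_{i=0}^{m−1} [ (c_i − 2y_{i,1} − 4y_{i,2} − y_{i,3}) · f(i+1)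 + 4 y_{i,3} · f(i) ] (an equality of integers). -/

import Mathlib

/-- The OP-LOCO code: words of length `m` over the alphabet `{0,...,7}`
(position `m-1` most significant) containing no contiguous subword `u 2 v` with
`u, v ∈ {0,1,4,5}` and no contiguous subword `u 5 v` with `u, v ∈ {2,3,6,7}`. -/
def OPC (m : ℕ) : Set (Fin m → Fin 8) :=
  {c | ∀ i : ℕ, ∀ h : i + 2 < m,
      ¬((c ⟨i + 2, h⟩ ∈ ({0, 1, 4, 5} : Set (Fin 8)) ∧ c ⟨i + 1, by omega⟩ = 2 ∧
            c ⟨i, by omega⟩ ∈ ({0, 1, 4, 5} : Set (Fin 8))) ∨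
        (c ⟨i + 2, h⟩ ∈ ({2, 3, 6, 7} : Set (Fin 8)) ∧ c ⟨i + 1, by omega⟩ = 5 ∧
            c ⟨i, by omega⟩ ∈ ({2, 3, 6, 7} : Set (Fin 8))))}

/-- `w` is lexicographically smaller than `c` (position `m-1` most significant):
at the most significant position where they differ, `w` has the smaller symbol. -/
def wordLT {m q : ℕ} (w c : Fin m → Fin q) : Prop :=
  ∃ k : Fin m, w k < c k ∧ ∀ j : Fin m, k < j → w j = c j

/-- The lexicographic index of `c` in the code `C`: the number of codewords of
`C` lexicographically smaller than `c`. -/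
noncomputable def lexIndex {m q : ℕ} (C : Set (Fin m → Fin q)) (c : Fin m → Fin q) : ℕ :=
  {w ∈ C | wordLT w c}.ncard

/-- The natural-number value of symbol `c_i`, with an out-of-alphabet default
for out-of-range indices. -/
def extVal {m q : ℕ} (c : Fin m → Fin q) (i : ℕ) : ℕ :=
  if h : i < m then (c ⟨i, h⟩ : ℕ) else q

/-- `y_{i,1} = 1` iff `i+2 ≤ m-1` and either (`c_{i+2} ∈ {0,1,4,5}`, `c_{i+1} = 2`,
`c_i ∈ {2,3}`) or (`c_{i+2} ∈ {2,3,6,7}`, `c_{i+1} = 5`, `c_i ∈ {4,5}`). -/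
def opY1 {m : ℕ} (c : Fin m → Fin 8) (i : ℕ) : ℤ :=
  if i + 2 < m ∧
      ((extVal c (i + 2) ∈ ({0, 1, 4, 5} : Finset ℕ) ∧ extVal c (i + 1) = 2 ∧
          extVal c i ∈ ({2, 3} : Finset ℕ)) ∨
        (extVal c (i + 2) ∈ ({2, 3, 6, 7} : Finset ℕ) ∧ extVal c (i + 1) = 5 ∧
          extVal c i ∈ ({4, 5} : Finset ℕ)))
  then 1 else 0

/-- `y_{i,2} = 1` iff `i+2 ≤ m-1`, `c_{i+2} ∈ {0,1,4,5}`, `c_{i+1} = 2`, `c_i ∈ {6,7}`. -/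
def opY2 {m : ℕ} (c : Fin m → Fin 8) (i : ℕ) : ℤ :=
  if i + 2 < m ∧ extVal c (i + 2) ∈ ({0, 1, 4, 5} : Finset ℕ) ∧ extVal c (i + 1) = 2 ∧
      extVal c i ∈ ({6, 7} : Finset ℕ)
  then 1 else 0

/-- `y_{i,3} = 1` iff `y_{i,1} = y_{i,2} = 0`, `i+1 ≤ m-1`, and either
(`c_{i+1} ∈ {0,1,4,5}` and `c_i ∈ {3,...,7}`) or (`c_{i+1} ∈ {2,3,6,7}` and `c_i ∈ {6,7}`). -/
def opY3 {m : ℕ} (c : Fin m → Fin 8) (i : ℕ) : ℤ :=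
  if opY1 c i = 0 ∧ opY2 c i = 0 ∧ i + 1 < m ∧
      ((extVal c (i + 1) ∈ ({0, 1, 4, 5} : Finset ℕ) ∧
          extVal c i ∈ ({3, 4, 5, 6, 7} : Finset ℕ)) ∨
        (extVal c (i + 1) ∈ ({2, 3, 6, 7} : Finset ℕ) ∧ extVal c i ∈ ({6, 7} : Finset ℕ)))
  then 1 else 0

/-!
A codeword `w < c` is determined by the most significant position `i` where it differs from `c`:
above `i` it agrees with `c`, at `i` it carries a symbol `b < c_i` such that `c_{i+2} c_{i+1} b`
is not forbidden, and below `i` it is any word that creates no forbidden pattern with the two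
symbols `b, c_{i+1}` above it. Peeling off the top symbol shows that the number of such
completions of length `i` only depends on whether `c_{i+1} b` begins a forbidden pattern: it is
`f i / 2` if it does and `f (i + 1) / 8` if it does not. The admissible symbols `b < c_i` of both
kinds are counted by a finite check, whose outcome is what the `y_{i,j}` record.
-/

namespace OPLoco

open Finset

def Forbidden (x y z : ℕ) : Prop :=
  (x ∈ ({0, 1, 4, 5} : Finset ℕ) ∧ y = 2 ∧ z ∈ ({0, 1, 4, 5} : Finset ℕ)) ∨
    (x ∈ ({2, 3, 6, 7} : Finset ℕ) ∧ y = 5 ∧ z ∈ ({2, 3, 6, 7} : Finset ℕ))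

def Opens (x y : ℕ) : Prop :=
  (x ∈ ({0, 1, 4, 5} : Finset ℕ) ∧ y = 2) ∨ (x ∈ ({2, 3, 6, 7} : Finset ℕ) ∧ y = 5)

instance (x y z : ℕ) : Decidable (Forbidden x y z) := inferInstanceAs (Decidable (_ ∨ _))

instance (x y : ℕ) : Decidable (Opens x y) := inferInstanceAs (Decidable (_ ∨ _))

instance {m q : ℕ} (w c : Fin m → Fin q) : Decidable (wordLT w c) :=
  inferInstanceAs (Decidable (∃ _, _))

def countFree : ℕ → ℕ
  | 0 => 1
  | 1 => 8
  | n + 2 => 7 * countFree (n + 1) + 4 * countFree n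

def countOpen : ℕ → ℕ
  | 0 => 1
  | n + 1 => 4 * countFree n

theorem countFree_succ (n : ℕ) : countFree (n + 1) = 7 * countFree n + countOpen n := by
  cases n <;> rfl

/-- The symbols of `w` read as numbers, followed on the significant side by `p` and then `q`;
`8` stands for an absent symbol, as in `extVal`. -/
def ctxVal {n : ℕ} (w : Fin n → Fin 8) (p q i : ℕ) : ℕ :=
  if h : i < n then w ⟨i, h⟩ else if i = n then p else if i = n + 1 then q else 8

def admissible (n p q : ℕ) : Finset (Fin n → Fin 8) :=
  {w | ∀ i < n, ¬Forbidden (ctxVal w p q (i + 2)) (ctxVal w p q (i + 1)) (ctxVal w p q i)}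

def lexRank (n p q : ℕ) (u : Fin n → Fin 8) : ℕ :=
  #{v ∈ admissible n p q | wordLT v u}

theorem wordLT_succ_iff {n q : ℕ} {v u : Fin (n + 1) → Fin q} :
    wordLT v u ↔ v (Fin.last n) < u (Fin.last n) ∨
      v (Fin.last n) = u (Fin.last n) ∧ wordLT (Fin.init v) (Fin.init u) := by
  constructor
  · rintro ⟨k, hlt, heq⟩
    rcases Fin.eq_castSucc_or_eq_last k with ⟨k, rfl⟩ | rfl
    · exact .inr ⟨heq _ (Fin.castSucc_lt_last k), k, hlt,
        fun j hj => heq _ (Fin.castSucc_lt_castSucc_iff.2 hj)⟩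
    · exact .inl hlt
  · rintro (hlt | ⟨hlast, k, hlt, heq⟩)
    · exact ⟨Fin.last n, hlt, fun j hj => absurd (Fin.le_last j) (not_le.2 hj)⟩
    · refine ⟨k.castSucc, hlt, fun j hj => ?_⟩
      rcases Fin.eq_castSucc_or_eq_last j with ⟨j, rfl⟩ | rfl
      · exact heq j (Fin.castSucc_lt_castSucc_iff.1 hj)
      · exact hlast

theorem ctxVal_init {n : ℕ} (v : Fin (n + 1) → Fin 8) (p q : ℕ) {i : ℕ} (hi : i ≤ n + 1) :
    ctxVal (Fin.init v) (v (Fin.last n)) p i = ctxVal v p q i := by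
  unfold ctxVal
  rcases lt_trichotomy i n with h | rfl | h
  · rw [dif_pos h, dif_pos (by omega)]; rfl
  · rw [dif_neg (lt_irrefl _), if_pos rfl, dif_pos (by omega)]; rfl
  · obtain rfl : i = n + 1 := by omega
    simp

theorem ctxVal_length {n : ℕ} (w : Fin n → Fin 8) (p q : ℕ) : ctxVal w p q n = p := by
  simp [ctxVal]

theorem ctxVal_length_add_one {n : ℕ} (w : Fin n → Fin 8) (p q : ℕ) :
    ctxVal w p q (n + 1) = q := by
  simp [ctxVal]

theorem ctxVal_eight_eight {n : ℕ} (w : Fin n → Fin 8) : ctxVal w 8 8 = extVal w := by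
  funext i
  unfold ctxVal extVal
  split_ifs <;> rfl

theorem mem_admissible_succ {n p q : ℕ} {v : Fin (n + 1) → Fin 8} :
    v ∈ admissible (n + 1) p q ↔
      ¬Forbidden q p (v (Fin.last n)) ∧ Fin.init v ∈ admissible n (v (Fin.last n)) p := by
  simp only [admissible, mem_filter, mem_univ, true_and, Nat.forall_lt_succ_right]
  rw [show n + 2 = n + 1 + 1 by rfl, ctxVal_length_add_one, ctxVal_length, and_comm]
  refine and_congr ?_ (forall₂_congr fun i hi => ?_)
  · rw [← ctxVal_init v p q (by omega), ctxVal_length]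
  · rw [ctxVal_init v p q (by omega), ctxVal_init v p q (by omega), ctxVal_init v p q (by omega)]

theorem card_filter_last_and_init {n p q : ℕ} (b : Fin 8) (P : (Fin n → Fin 8) → Prop)
    [DecidablePred P] :
    #{v ∈ admissible (n + 1) p q | v (Fin.last n) = b ∧ P (Fin.init v)} =
      if Forbidden q p b then 0 else #{u ∈ admissible n b p | P u} := by
  split_ifs with hb
  · rw [card_eq_zero, filter_eq_empty_iff]
    rintro v hv ⟨rfl, -⟩
    exact (mem_admissible_succ.1 hv).1 hb
  · refine card_bij' (fun v _ => Fin.init v) (fun u _ => Fin.snoc u b) ?_ ?_ ?_ ?_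
    · simp only [mem_filter, and_imp]
      rintro v hv rfl hP
      exact ⟨(mem_admissible_succ.1 hv).2, hP⟩
    · simp only [mem_filter, and_imp]
      intro u hu hP
      simp [mem_admissible_succ, hb, hu, hP]
    · simp only [mem_filter, and_imp]
      rintro v - rfl -
      exact Fin.snoc_init_self v
    · simp

theorem card_filter_last {n p q : ℕ} (b : Fin 8) :
    #{v ∈ admissible (n + 1) p q | v (Fin.last n) = b} =
      if Forbidden q p b then 0 else #(admissible n b p) := by
  simpa using card_filter_last_and_init (p := p) (q := q) b (fun _ => True)

theorem sum_ite_zero_ite {ι R : Type*} [NonAssocSemiring R] (s : Finset ι) (p r : ι → Prop)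
    [DecidablePred p] [DecidablePred r] (x y : R) :
    ∑ i ∈ s, (if p i then 0 else if r i then y else x) =
      #{i ∈ s | ¬p i ∧ ¬r i} * x + #{i ∈ s | ¬p i ∧ r i} * y := by
  simp [sum_ite, filter_filter, add_comm]

theorem card_free_symbols : ∀ a2 ≤ 8, ∀ a1 < 8,
    #{b : Fin 8 | ¬Forbidden a2 a1 b ∧ ¬Opens a1 b} = if Opens a2 a1 then 4 else 7 := by
  decide

theorem card_opening_symbols : ∀ a2 ≤ 8, ∀ a1 < 8,
    #{b : Fin 8 | ¬Forbidden a2 a1 b ∧ Opens a1 b} = if Opens a2 a1 then 0 else 1 := by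
  decide

theorem card_admissible (n : ℕ) {p q : ℕ} (hp : p < 8) (hq : q ≤ 8) :
    #(admissible n p q) = if Opens q p then countOpen n else countFree n := by
  induction n generalizing p q with
  | zero => simp [admissible, countFree, countOpen]
  | succ n ih =>
    rw [card_eq_sum_card_fiberwise (fun v _ => mem_univ (v (Fin.last n)))]
    simp only [card_filter_last]
    rw [sum_congr rfl fun b _ => by rw [ih b.isLt hp.le], sum_ite_zero_ite,
      card_free_symbols q hq p hp, card_opening_symbols q hq p hp]
    split_ifs <;> simp [countFree_succ, countOpen]

/-- The `y_{i,j}` as functions of `c_{i+2}, c_{i+1}, c_i`; `a < 8` says that the symbol exists. -/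
def y1 (a2 a1 a0 : ℕ) : ℕ :=
  if a2 < 8 ∧
      ((a2 ∈ ({0, 1, 4, 5} : Finset ℕ) ∧ a1 = 2 ∧ a0 ∈ ({2, 3} : Finset ℕ)) ∨
        (a2 ∈ ({2, 3, 6, 7} : Finset ℕ) ∧ a1 = 5 ∧ a0 ∈ ({4, 5} : Finset ℕ)))
  then 1 else 0

def y2 (a2 a1 a0 : ℕ) : ℕ :=
  if a2 < 8 ∧ a2 ∈ ({0, 1, 4, 5} : Finset ℕ) ∧ a1 = 2 ∧ a0 ∈ ({6, 7} : Finset ℕ)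
  then 1 else 0

def y3 (a2 a1 a0 : ℕ) : ℕ :=
  if y1 a2 a1 a0 = 0 ∧ y2 a2 a1 a0 = 0 ∧ a1 < 8 ∧
      ((a1 ∈ ({0, 1, 4, 5} : Finset ℕ) ∧ a0 ∈ ({3, 4, 5, 6, 7} : Finset ℕ)) ∨
        (a1 ∈ ({2, 3, 6, 7} : Finset ℕ) ∧ a0 ∈ ({6, 7} : Finset ℕ)))
  then 1 else 0

def rankTerm (a2 a1 a0 : ℕ) (P Q : ℤ) : ℤ :=
  ((a0 : ℤ) - 2 * y1 a2 a1 a0 - 4 * y2 a2 a1 a0 - y3 a2 a1 a0) * P + y3 a2 a1 a0 * Q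

theorem card_free_symbols_lt :
    ∀ a2 ≤ 8, ∀ a1 ≤ 8, ∀ a0 : Fin 8, ¬Forbidden a2 a1 a0 →
    #{b : Fin 8 | b < a0 ∧ ¬Forbidden a2 a1 b ∧ ¬Opens a1 b} +
      2 * y1 a2 a1 a0 + 4 * y2 a2 a1 a0 + y3 a2 a1 a0 = a0 := by
  decide

theorem card_opening_symbols_lt :
    ∀ a2 ≤ 8, ∀ a1 ≤ 8, ∀ a0 : Fin 8, ¬Forbidden a2 a1 a0 →
    #{b : Fin 8 | b < a0 ∧ ¬Forbidden a2 a1 b ∧ Opens a1 b} = y3 a2 a1 a0 := by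
  decide

theorem sum_lower_symbols {a2 a1 : ℕ} {a0 : Fin 8} (h2 : a2 ≤ 8) (h1 : a1 ≤ 8)
    (hF : ¬Forbidden a2 a1 a0) (P Q : ℤ) :
    ∑ b with b < a0, (if Forbidden a2 a1 b then 0 else if Opens a1 b then Q else P) =
      rankTerm a2 a1 a0 P Q := by
  have hfree := card_free_symbols_lt a2 h2 a1 h1 a0 hF
  have hfree' : (#{b : Fin 8 | b < a0 ∧ ¬Forbidden a2 a1 b ∧ ¬Opens a1 b} : ℤ) =
      a0 - 2 * y1 a2 a1 a0 - 4 * y2 a2 a1 a0 - y3 a2 a1 a0 := by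
    omega
  rw [sum_ite_zero_ite, filter_filter, filter_filter, hfree',
    card_opening_symbols_lt a2 h2 a1 h1 a0 hF, rankTerm]

theorem lexRank_succ {n p q : ℕ} {u : Fin (n + 1) → Fin 8} (hu : u ∈ admissible (n + 1) p q) :
    lexRank (n + 1) p q u =
      ∑ b : Fin 8 with b < u (Fin.last n), (if Forbidden q p b then 0 else #(admissible n b p)) +
        lexRank n (u (Fin.last n)) p (Fin.init u) := by
  have hdisj : Disjoint {v ∈ admissible (n + 1) p q | v (Fin.last n) < u (Fin.last n)}
      {v ∈ admissible (n + 1) p q |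
        v (Fin.last n) = u (Fin.last n) ∧ wordLT (Fin.init v) (Fin.init u)} :=
    disjoint_filter.2 fun v _ hlt heq => hlt.ne heq.1
  rw [lexRank, filter_congr fun v _ => wordLT_succ_iff, filter_or, card_union_of_disjoint hdisj,
    card_filter_last_and_init _ fun w => wordLT w (Fin.init u),
    if_neg (mem_admissible_succ.1 hu).1, ← lexRank]
  simp only [← card_filter_last, sum_card_fiberwise_eq_card_filter, mem_filter, mem_univ,
    true_and]

theorem lexRank_eq (n : ℕ) {p q : ℕ} (hp : p ≤ 8) (hq : q ≤ 8) {u : Fin n → Fin 8}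
    (hu : u ∈ admissible n p q) :
    (lexRank n p q u : ℤ) = ∑ i : Fin n,
      rankTerm (ctxVal u p q (i + 2)) (ctxVal u p q (i + 1)) (u i) (countFree i) (countOpen i) := by
  induction n generalizing p q with
  | zero => simp [lexRank, wordLT]
  | succ n ih =>
    obtain ⟨hF, hinit⟩ := mem_admissible_succ.1 hu
    rw [lexRank_succ hu, Fin.sum_univ_castSucc, add_comm]
    push_cast
    congr 1
    · rw [ih (u (Fin.last n)).isLt.le hp hinit]
      refine sum_congr rfl fun i _ => ?_
      simp only [Fin.val_castSucc, ← ctxVal_init u p q (show (i : ℕ) + 2 ≤ n + 1 by omega),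
        ← ctxVal_init u p q (show (i : ℕ) + 1 ≤ n + 1 by omega)]
      rfl
    · rw [ctxVal_length_add_one, ctxVal_length, ← sum_lower_symbols hq hp hF]
      refine sum_congr rfl fun b _ => ?_
      rw [card_admissible n b.isLt hp]
      split_ifs <;> simp

theorem extVal_lt_iff {m q : ℕ} (c : Fin m → Fin q) (i : ℕ) : extVal c i < q ↔ i < m := by
  unfold extVal
  split_ifs with h <;> simp [h]

theorem extVal_of_lt {m q : ℕ} (c : Fin m → Fin q) {i : ℕ} (h : i < m) :
    extVal c i = c ⟨i, h⟩ :=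
  dif_pos h

theorem extVal_of_le {m q : ℕ} (c : Fin m → Fin q) {i : ℕ} (h : m ≤ i) : extVal c i = q :=
  dif_neg h.not_gt

theorem forbidden_val_iff (x y z : Fin 8) :
    Forbidden x y z ↔
      (x ∈ ({0, 1, 4, 5} : Set (Fin 8)) ∧ y = 2 ∧ z ∈ ({0, 1, 4, 5} : Set (Fin 8))) ∨
        (x ∈ ({2, 3, 6, 7} : Set (Fin 8)) ∧ y = 5 ∧ z ∈ ({2, 3, 6, 7} : Set (Fin 8))) := by
  simp only [Set.mem_insert_iff, Set.mem_singleton_iff]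
  revert x y z
  decide

theorem mem_OPC_iff {m : ℕ} (c : Fin m → Fin 8) : c ∈ OPC m ↔ c ∈ admissible m 8 8 := by
  simp only [OPC, admissible, ctxVal_eight_eight, Set.mem_ofPred_eq, mem_filter, mem_univ,
    true_and]
  constructor
  · intro h i hi
    by_cases h2 : i + 2 < m
    · rw [extVal_of_lt c h2, extVal_of_lt c (by omega), extVal_of_lt c hi, forbidden_val_iff]
      exact h i h2
    · rw [extVal_of_le c (by omega)]
      simp [Forbidden]
  · intro h i h2
    have := h i (by omega)
    rwa [extVal_of_lt c h2, extVal_of_lt c (by omega), extVal_of_lt c (by omega),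
      forbidden_val_iff] at this

theorem lexIndex_OPC {m : ℕ} (c : Fin m → Fin 8) : lexIndex (OPC m) c = lexRank m 8 8 c := by
  have hOPC : OPC m = admissible m 8 8 := Set.ext mem_OPC_iff
  rw [lexIndex, lexRank, hOPC, ← Set.ncard_coe_finset, coe_filter]
  rfl

theorem opY1_eq {m : ℕ} (c : Fin m → Fin 8) (i : ℕ) :
    opY1 c i = y1 (extVal c (i + 2)) (extVal c (i + 1)) (extVal c i) := by
  simp only [opY1, y1, extVal_lt_iff]
  split_ifs <;> rfl

theorem opY2_eq {m : ℕ} (c : Fin m → Fin 8) (i : ℕ) :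
    opY2 c i = y2 (extVal c (i + 2)) (extVal c (i + 1)) (extVal c i) := by
  simp only [opY2, y2, extVal_lt_iff]
  split_ifs <;> rfl

theorem opY3_eq {m : ℕ} (c : Fin m → Fin 8) (i : ℕ) :
    opY3 c i = y3 (extVal c (i + 2)) (extVal c (i + 1)) (extVal c i) := by
  simp only [opY3, y3, opY1_eq, opY2_eq, extVal_lt_iff, Nat.cast_eq_zero]
  split_ifs <;> rfl

theorem eq_countOpen_and_countFree {f : ℕ → ℕ} (hf0 : f 0 = 2) (hf1 : f 1 = 8)
    (hrec : ∀ k : ℕ, 2 ≤ k → f k = 7 * f (k - 1) + 4 * f (k - 2)) :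
    ∀ n, f n = 2 * countOpen n ∧ f (n + 1) = 8 * countFree n
  | 0 => by simp [countOpen, countFree, hf0, hf1]
  | n + 1 => by
    obtain ⟨ih0, ih1⟩ := eq_countOpen_and_countFree hf0 hf1 hrec n
    refine ⟨by rw [ih1, countOpen]; ring, ?_⟩
    rw [hrec (n + 2) le_add_self, show n + 2 - 1 = n + 1 by omega, Nat.add_sub_cancel, ih1, ih0,
      countFree_succ]
    ring

end OPLoco

open OPLoco

theorem stmt12_general (m : ℕ) (f : ℕ → ℕ) (hf0 : f 0 = 2) (hf1 : f 1 = 8)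
    (hrec : ∀ k : ℕ, 2 ≤ k → f k = 7 * f (k - 1) + 4 * f (k - 2))
    (c : Fin m → Fin 8) (hc : c ∈ OPC m) :
    8 * (lexIndex (OPC m) c : ℤ) =
      ∑ i : Fin m,
        ((((c i : ℕ) : ℤ) - 2 * opY1 c (i : ℕ) - 4 * opY2 c (i : ℕ) - opY3 c (i : ℕ)) *
            (f ((i : ℕ) + 1) : ℤ)
          + 4 * opY3 c (i : ℕ) * (f (i : ℕ) : ℤ)) := by
  rw [lexIndex_OPC, lexRank_eq m le_rfl le_rfl ((mem_OPC_iff c).1 hc), Finset.mul_sum]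
  refine Finset.sum_congr rfl fun i _ => ?_
  obtain ⟨hf, hf_succ⟩ := eq_countOpen_and_countFree hf0 hf1 hrec i
  rw [ctxVal_eight_eight, opY1_eq, opY2_eq, opY3_eq, extVal_of_lt c i.isLt, hf, hf_succ, rankTerm]
  push_cast
  ring

theorem stmt12 (m : ℕ) (hm : 1 ≤ m) (f : ℕ → ℕ) (hf0 : f 0 = 2) (hf1 : f 1 = 8)
    (hrec : ∀ k : ℕ, 2 ≤ k → f k = 7 * f (k - 1) + 4 * f (k - 2))
    (c : Fin m → Fin 8) (hc : c ∈ OPC m) :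
    8 * (lexIndex (OPC m) c : ℤ) =
      ∑ i : Fin m,
        ((((c i : ℕ) : ℤ) - 2 * opY1 c (i : ℕ) - 4 * opY2 c (i : ℕ) - opY3 c (i : ℕ)) *
            (f ((i : ℕ) + 1) : ℤ)
          + 4 * opY3 c (i : ℕ) * (f (i : ℕ) : ℤ)) :=
  stmt12_general m f hf0 hf1 hrec c hc
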